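/- Under the standing hypotheses, with φ* := lim_k R_k and c := √(τ_max/(p_min σ a)), one has min_{0 ≤ j ≤ k} τ_j ‖d^j‖ ≤ c √(R_0 − φ*) / √(k+1) for all k ∈ ℕ. -/

import Mathlib

/-! The Armijo condition at the accepted step decreases the reference value `R_k` by at least
`p_min σ a τ_k ‖d^k‖²`, and `τ_k ≤ τ_max` turns this into `(τ_k ‖d^k‖)² ≤ τ_max / (p_min σ a)` times
that decrease. Summing, the decreases telescope to at most `R_0 - φ*`, so the smallest of the
`k + 1` squares `(τ_j ‖d^j‖)²` is at most `τ_max (R_0 - φ*) / (p_min σ a (k + 1))`. -/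

open Set Filter Topology

noncomputable section

variable {E : Type*} [NormedAddCommGroup E] [InnerProductSpace ℝ E] [FiniteDimensional ℝ E]

open Classical in
/-- The indicator function of a set `M` (`0` on `M`, `+∞` elsewhere), with values in `EReal`. -/
def indicatorFun (M : Set E) (x : E) : EReal := if x ∈ M then 0 else ⊤

/-- The Fréchet (regular) subdifferential of an extended-real-valued function `g` at `x`. -/
def frechetSubdiff (g : E → EReal) (x : E) : Set E :=
  {v | ∀ ε : ℝ, 0 < ε →
    ∀ᶠ y in 𝓝 x, g x + (((inner ℝ v (y - x) : ℝ) - ε * ‖y - x‖ : ℝ) : EReal) ≤ g y}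

/-- The limiting (Mordukhovich) subdifferential of `g` at `x`. -/
def limitingSubdiff (g : E → EReal) (x : E) : Set E :=
  {v | ∃ xs vs : ℕ → E,
    Tendsto xs atTop (𝓝 x) ∧
    Tendsto (fun n => g (xs n)) atTop (𝓝 (g x)) ∧
    (∀ n, vs n ∈ frechetSubdiff g (xs n)) ∧
    Tendsto vs atTop (𝓝 v)}

/-- The projectional limiting subdifferential of `g` at `x` relative to `M`:
the orthogonal projection onto the tangent space `T x` of the limiting
subdifferential of `g + δ_M` at `x`. -/
def projSubdiff (g : E → ℝ) (M : Set E) (T : E → Submodule ℝ E) (x : E) : Set E :=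
  (fun v => (((T x).orthogonalProjectionOnto v : T x) : E)) ''
    limitingSubdiff (fun y => (g y : EReal) + indicatorFun M y) x

/-- `M ⊆ E` is a smooth embedded submanifold with tangent spaces `T x`: around each
point of `M` there is a `C¹` local defining function with surjective derivative at
that point, and on `M` the tangent space is the kernel of the derivative. -/
def IsSubmanifold (M : Set E) (T : E → Submodule ℝ E) : Prop :=
  ∀ x ∈ M, ∃ (m : ℕ) (U : Set E) (F : E → (Fin m → ℝ)),
    IsOpen U ∧ x ∈ U ∧ ContDiffOn ℝ 1 F U ∧
    Function.Surjective ⇑(fderiv ℝ F x) ∧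
    M ∩ U = {y ∈ U | F y = 0} ∧
    ∀ y ∈ M ∩ U, T y = LinearMap.ker (fderiv ℝ F y : E →ₗ[ℝ] (Fin m → ℝ))

/-- A retraction on the submanifold `M` with tangent spaces `T`: a `C²` map on the
tangent bundle with values in `M` such that `R_x(0) = x` and `DR_x(0) = id`. -/
structure Retraction (M : Set E) (T : E → Submodule ℝ E) where
  R : E → E → E
  mem_target : ∀ x ∈ M, ∀ ξ ∈ T x, R x ξ ∈ M
  map_zero : ∀ x ∈ M, R x 0 = x
  smooth : ContDiffOn ℝ 2 (fun p : E × E => R p.1 p.2) {p : E × E | p.1 ∈ M ∧ p.2 ∈ T p.1}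
  deriv_id : ∀ x ∈ M, ∀ ξ ∈ T x, HasDerivAt (fun t : ℝ => R x (t • ξ)) ξ 0

/-- Assumption A1: a local nonsmooth descent property of `φ` along the retraction,
together with local boundedness of the projectional subdifferential on `M`. -/
def AssumptionA1 (M : Set E) (T : E → Submodule ℝ E) (Ret : Retraction M T) (φ : E → ℝ) : Prop :=
  (∀ z ∈ M, ∃ κ > (0:ℝ), ∃ r > (0:ℝ), ∃ O : Set E, IsOpen O ∧ z ∈ O ∧
    ∀ x ∈ M ∩ O, ∀ ξ ∈ T x, ‖ξ‖ ≤ r → ∀ w ∈ projSubdiff φ M T x,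
      φ (Ret.R x ξ) - (φ x + (inner ℝ w ξ : ℝ)) ≤ κ * ‖ξ‖ ^ 2) ∧
  (∀ z ∈ M, ∃ ρ > (0:ℝ), ∃ c : ℝ, ∀ x ∈ M, ‖x - z‖ < ρ →
    ∀ w ∈ projSubdiff φ M T x, ‖w‖ ≤ c)

/-- A run of the nonmonotone subgradient method on the manifold `M`:
subgradients `w k`, directions `d k`, stepsizes `τ k` obtained by backtracking
from initial trial stepsizes `τhat k` (with `j k` backtracking steps), iterates
`x k` and reference values `Rv k` updated by the mean-rule with weights `p k`. -/
structure AlgSeq (M : Set E) (T : E → Submodule ℝ E) (Ret : Retraction M T) (φ : E → ℝ)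
    (σ β τmin τmax pmin a b : ℝ) where
  x : ℕ → E
  w : ℕ → E
  d : ℕ → E
  τhat : ℕ → ℝ
  j : ℕ → ℕ
  τ : ℕ → ℝ
  p : ℕ → ℝ
  Rv : ℕ → ℝ
  x_mem : ∀ k, x k ∈ M
  w_mem : ∀ k, w k ∈ projSubdiff φ M T (x k)
  w_ne : ∀ k, w k ≠ 0
  d_mem : ∀ k, d k ∈ T (x k)
  d_ne : ∀ k, d k ≠ 0
  descent : ∀ k, (inner ℝ (w k) (d k) : ℝ) ≤ -a * ‖d k‖ ^ 2
  dir_bound : ∀ k, ‖w k‖ ≤ b * ‖d k‖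
  τhat_mem : ∀ k, τhat k ∈ Set.Icc τmin τmax
  τ_def : ∀ k, τ k = β ^ (j k) * τhat k
  j_least : ∀ k, IsLeast {i : ℕ |
      φ (Ret.R (x k) ((β ^ i * τhat k) • d k)) ≤
        Rv k + σ * (β ^ i * τhat k) * (inner ℝ (w k) (d k) : ℝ)} (j k)
  x_succ : ∀ k, x (k + 1) = Ret.R (x k) (τ k • d k)
  p_mem : ∀ k, p (k + 1) ∈ Set.Icc pmin 1
  R_zero : Rv 0 = φ (x 0)
  R_succ : ∀ k, Rv (k + 1) = (1 - p (k + 1)) * Rv k + p (k + 1) * φ (x (k + 1))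

open Finset in
theorem sum_range_le_sub_of_tendsto {R s : ℕ → ℝ} {L : ℝ} (hs : ∀ n, 0 ≤ s n)
    (hR : ∀ n, R (n + 1) ≤ R n - s n) (hL : Tendsto R atTop (𝓝 L)) (n : ℕ) :
    ∑ i ∈ range n, s i ≤ R 0 - L := by
  have hanti : Antitone R := antitone_nat_of_succ_le fun n => by linarith [hR n, hs n]
  calc ∑ i ∈ range n, s i
      ≤ ∑ i ∈ range n, (R i - R (i + 1)) := sum_le_sum fun i _ => by linarith [hR i]
    _ = R 0 - R n := sum_range_sub' R n
    _ ≤ R 0 - L := by linarith [hanti.le_of_tendsto hL n]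

open Finset in
theorem exists_le_sqrt_div_of_sum_sq_le {u : ℕ → ℝ} {C : ℝ} (k : ℕ)
    (h : ∑ i ∈ range (k + 1), u i ^ 2 ≤ C) : ∃ i ≤ k, u i ≤ √C / √((k : ℝ) + 1) := by
  obtain ⟨i, hi, hmin⟩ := (range (k + 1)).exists_min_image (fun i => u i ^ 2) nonempty_range_add_one
  refine ⟨i, Nat.lt_succ_iff.mp (mem_range.mp hi), ?_⟩
  have hcard : ((k : ℝ) + 1) * u i ^ 2 ≤ C := by
    have := card_nsmul_le_sum _ _ _ hmin
    rw [card_range, nsmul_eq_mul] at this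
    push_cast at this
    linarith
  rw [← Real.sqrt_div' C (by positivity)]
  exact (le_abs_self _).trans (Real.abs_le_sqrt (by rw [le_div_iff₀ (by positivity)]; linarith))

namespace AlgSeq

variable {M : Set E} {T : E → Submodule ℝ E} {Ret : Retraction M T} {φ : E → ℝ}
  {σ β τmin τmax pmin a b : ℝ} (A : AlgSeq M T Ret φ σ β τmin τmax pmin a b)

theorem τhat_nonneg (hτmin : 0 ≤ τmin) (k : ℕ) : 0 ≤ A.τhat k :=
  hτmin.trans (A.τhat_mem k).1

theorem τmax_nonneg (A : AlgSeq M T Ret φ σ β τmin τmax pmin a b) (hτmin : 0 ≤ τmin) : 0 ≤ τmax :=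
  (A.τhat_nonneg hτmin 0).trans (A.τhat_mem 0).2

theorem τ_nonneg (hβ : 0 ≤ β) (hτmin : 0 ≤ τmin) (k : ℕ) : 0 ≤ A.τ k := by
  rw [A.τ_def k]
  exact mul_nonneg (pow_nonneg hβ _) (A.τhat_nonneg hτmin k)

theorem τ_le (hβ₀ : 0 ≤ β) (hβ₁ : β ≤ 1) (hτmin : 0 ≤ τmin) (k : ℕ) : A.τ k ≤ τmax := by
  rw [A.τ_def k]
  calc β ^ A.j k * A.τhat k ≤ 1 * A.τhat k :=
        mul_le_mul_of_nonneg_right (pow_le_one₀ hβ₀ hβ₁) (A.τhat_nonneg hτmin k)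
    _ ≤ τmax := by rw [one_mul]; exact (A.τhat_mem k).2

theorem φ_succ_le {k : ℕ} (hσ : 0 ≤ σ) (hτ : 0 ≤ A.τ k) :
    φ (A.x (k + 1)) ≤ A.Rv k - σ * a * (A.τ k * ‖A.d k‖ ^ 2) := by
  have harmijo : φ (Ret.R (A.x k) ((β ^ A.j k * A.τhat k) • A.d k)) ≤
      A.Rv k + σ * (β ^ A.j k * A.τhat k) * inner ℝ (A.w k) (A.d k) := (A.j_least k).1
  rw [← A.τ_def, ← A.x_succ] at harmijo
  have := mul_le_mul_of_nonneg_left (A.descent k) (mul_nonneg hσ hτ)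
  linarith

theorem Rv_succ_le {k : ℕ} (hσ : 0 ≤ σ) (hpmin : 0 ≤ pmin) (ha : 0 ≤ a) (hτ : 0 ≤ A.τ k) :
    A.Rv (k + 1) ≤ A.Rv k - pmin * σ * a * (A.τ k * ‖A.d k‖ ^ 2) := by
  set s := σ * a * (A.τ k * ‖A.d k‖ ^ 2)
  have hs : 0 ≤ s := by positivity
  have hp₁ := (A.p_mem k).1
  calc A.Rv (k + 1) ≤ (1 - A.p (k + 1)) * A.Rv k + A.p (k + 1) * (A.Rv k - s) := by
        rw [A.R_succ k]
        gcongr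
        · exact hpmin.trans hp₁
        · exact A.φ_succ_le hσ hτ
    _ = A.Rv k - A.p (k + 1) * s := by ring
    _ ≤ A.Rv k - pmin * σ * a * (A.τ k * ‖A.d k‖ ^ 2) := by
        have := mul_le_mul_of_nonneg_right hp₁ hs
        linarith

open Finset in
theorem sum_sq_step_le (hσ : 0 < σ) (hβ₀ : 0 ≤ β) (hβ₁ : β ≤ 1) (hτmin : 0 ≤ τmin)
    (hpmin : 0 < pmin) (ha : 0 < a) {φstar : ℝ} (hφstar : Tendsto A.Rv atTop (𝓝 φstar))
    (n : ℕ) :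
    ∑ i ∈ range n, (A.τ i * ‖A.d i‖) ^ 2 ≤ τmax / (pmin * σ * a) * (A.Rv 0 - φstar) := by
  have hq : 0 < pmin * σ * a := by positivity
  have hτ := A.τ_nonneg hβ₀ hτmin
  have hdecrease := sum_range_le_sub_of_tendsto
    (fun k => mul_nonneg hq.le (mul_nonneg (hτ k) (sq_nonneg _)))
    (fun k => A.Rv_succ_le hσ.le hpmin.le ha.le (hτ k)) hφstar n
  calc ∑ i ∈ range n, (A.τ i * ‖A.d i‖) ^ 2
      ≤ ∑ i ∈ range n, τmax / (pmin * σ * a) * (pmin * σ * a * (A.τ i * ‖A.d i‖ ^ 2)) := by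
        refine sum_le_sum fun i _ => ?_
        rw [← mul_assoc, div_mul_cancel₀ _ hq.ne', mul_pow, ← mul_assoc, sq (A.τ i)]
        gcongr
        · exact hτ i
        · exact A.τ_le hβ₀ hβ₁ hτmin i
    _ = τmax / (pmin * σ * a) * ∑ i ∈ range n, pmin * σ * a * (A.τ i * ‖A.d i‖ ^ 2) :=
        (mul_sum _ _ _).symm
    _ ≤ τmax / (pmin * σ * a) * (A.Rv 0 - φstar) := by
        gcongr
        exact div_nonneg (A.τmax_nonneg hτmin) hq.le

end AlgSeq

theorem stmt8_general
    (M : Set E) (T : E → Submodule ℝ E) (Ret : Retraction M T) (φ : E → ℝ)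
    (σ β τmin τmax pmin a b : ℝ)
    (hσ : σ ∈ Set.Ioo (0:ℝ) 1) (hβ : β ∈ Set.Ioo (0:ℝ) 1)
    (hτmin : 0 < τmin)
    (hpmin : pmin ∈ Set.Ioc (0:ℝ) 1) (ha : 0 < a)
    (A : AlgSeq M T Ret φ σ β τmin τmax pmin a b)
    (φstar : ℝ) (hφstar : Tendsto A.Rv atTop (𝓝 φstar)) :
    ∀ k : ℕ, ∃ i ≤ k, A.τ i * ‖A.d i‖ ≤
      Real.sqrt (τmax / (pmin * σ * a)) * Real.sqrt (A.Rv 0 - φstar) /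
        Real.sqrt ((k : ℝ) + 1) := by
  intro k
  have hc : 0 ≤ τmax / (pmin * σ * a) :=
    div_nonneg (A.τmax_nonneg hτmin.le) (mul_pos (mul_pos hpmin.1 hσ.1) ha).le
  obtain ⟨i, hik, hi⟩ := exists_le_sqrt_div_of_sum_sq_le k
    (A.sum_sq_step_le hσ.1 hβ.1.le hβ.2.le hτmin.le hpmin.1 ha hφstar (k + 1))
  exact ⟨i, hik, by rwa [Real.sqrt_mul hc] at hi⟩

/-- Complexity estimate: `min_{0 ≤ j ≤ k} τ_j ‖d^j‖ ≤ c √(R_0 - φ*) / √(k+1)`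
with `c = √(τmax / (pmin σ a))`. -/
theorem stmt8
    (M : Set E) (T : E → Submodule ℝ E) (Ret : Retraction M T) (φ : E → ℝ)
    (σ β τmin τmax pmin a b : ℝ)
    (hσ : σ ∈ Set.Ioo (0:ℝ) 1) (hβ : β ∈ Set.Ioo (0:ℝ) 1)
    (hτmin : 0 < τmin) (hττ : τmin ≤ τmax)
    (hpmin : pmin ∈ Set.Ioc (0:ℝ) 1) (ha : 0 < a) (hb : 0 < b)
    (hM : IsSubmanifold M T)
    (hφcont : ContinuousOn φ M)
    (hφbdd : BddBelow (φ '' M))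
    (hA1 : AssumptionA1 M T Ret φ)
    (A : AlgSeq M T Ret φ σ β τmin τmax pmin a b)
    (φstar : ℝ) (hφstar : Tendsto A.Rv atTop (𝓝 φstar)) :
    ∀ k : ℕ, ∃ i ≤ k, A.τ i * ‖A.d i‖ ≤
      Real.sqrt (τmax / (pmin * σ * a)) * Real.sqrt (A.Rv 0 - φstar) /
        Real.sqrt ((k : ℝ) + 1) :=
  stmt8_general M T Ret φ σ β τmin τmax pmin a b hσ hβ hτmin hpmin ha A φstar hφstar

end
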